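/- arXiv:2602.10335 — 2 statements merged into one kernel-verified Lean document; each statement's English description precedes it below -/
import Mathlib

section
/- For a < b real, the double integral ∫_a^b ∫_a^b G(t,s)^2 ds dt is at most (b-a)^4/16, where G is the Dirichlet Green's function on [a,b]. -/
/-! On the square `[a, b]²` the Green's function is a product `x * y / (b - a)` of two nonnegative
numbers with `x + y ≤ b - a`, so by AM-GM `0 ≤ G ≤ (b - a) / 4`. Hence `G² ≤ (b - a)² / 16`, and
integrating this constant bound over a square of area `(b - a)²` gives the claim; the estimate
`‖∫ f‖ ≤ C * |b - a|` for `‖f‖ ≤ C` needs no integrability, so none of `G` has to be proved. -/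

open Set intervalIntegral
open scoped Interval

theorem norm_integral_integral_le_of_norm_le_const {E : Type*} [NormedAddCommGroup E]
    [NormedSpace ℝ E] {a b c d C : ℝ} {f : ℝ → ℝ → E}
    (h : ∀ t ∈ Ι a b, ∀ s ∈ Ι c d, ‖f t s‖ ≤ C) :
    ‖∫ t in a..b, ∫ s in c..d, f t s‖ ≤ C * |d - c| * |b - a| :=
  norm_integral_le_of_norm_le_const fun t ht => norm_integral_le_of_norm_le_const (h t ht)

theorem mul_div_le_div_four_of_add_le {x y c : ℝ} (hx : 0 ≤ x) (hy : 0 ≤ y) (hc : 0 < c)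
    (hxy : x + y ≤ c) : x * y / c ≤ c / 4 := by
  rw [div_le_div_iff₀ hc four_pos]
  nlinarith [four_mul_le_sq_add x y]

theorem green_mem_Icc {a b u v : ℝ} (hab : a < b) (hu : a ≤ u) (huv : u ≤ v) (hv : v ≤ b) :
    (u - a) * (b - v) / (b - a) ∈ Icc 0 ((b - a) / 4) :=
  ⟨by have := sub_pos.2 hab; positivity,
    mul_div_le_div_four_of_add_le (by linarith) (by linarith) (by linarith) (by linarith)⟩

theorem green_square_integral_bound (a b : ℝ) (hab : a < b)
    (G : ℝ → ℝ → ℝ)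
    (hG1 : ∀ t s, t ≤ s → G t s = (t - a) * (b - s) / (b - a))
    (hG2 : ∀ t s, s ≤ t → G t s = (s - a) * (b - t) / (b - a)) :
    (∫ t in a..b, ∫ s in a..b, (G t s) ^ 2) ≤ (b - a) ^ 4 / 16 := by
  have hG : ∀ t ∈ Ι a b, ∀ s ∈ Ι a b, G t s ∈ Icc 0 ((b - a) / 4) := by
    rw [uIoc_of_le hab.le]
    rintro t ⟨hat, htb⟩ s ⟨has, hsb⟩
    rcases le_total t s with hts | hst
    · exact hG1 t s hts ▸ green_mem_Icc hab hat.le hts hsb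
    · exact hG2 t s hst ▸ green_mem_Icc hab has.le hst htb
  have hG_sq : ∀ t ∈ Ι a b, ∀ s ∈ Ι a b, ‖G t s ^ 2‖ ≤ (b - a) ^ 2 / 16 := by
    intro t ht s hs
    obtain ⟨h0, h4⟩ := hG t ht s hs
    rw [Real.norm_of_nonneg (by positivity)]
    nlinarith
  calc (∫ t in a..b, ∫ s in a..b, G t s ^ 2)
      ≤ ‖∫ t in a..b, ∫ s in a..b, G t s ^ 2‖ := Real.le_norm_self _
    _ ≤ (b - a) ^ 2 / 16 * |b - a| * |b - a| := norm_integral_integral_le_of_norm_le_const hG_sq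
    _ = (b - a) ^ 4 / 16 := by rw [abs_of_pos (sub_pos.2 hab)]; ring
end

section
/- Let λ ∈ ℝ with λ ∉ {0, 2} and suppose real numbers satisfy: y(t) = A sin(√λ t) for t ∈ [0,1] with A ≠ 0, together with the discrete equations 2y₂ − y₁ = λ y₂ and y₂ = (1 − λ)y₁ + A√λ cos(√λ), where y₁ = A sin(√λ). Then (λ² − 3λ + 1) sin(√λ) + (2 − λ)√λ cos(√λ) = 0. -/
theorem hybrid_characteristic_equation_general
    (lam A y1 y2 : ℝ) (hA : A ≠ 0)
    (hy1 : y1 = A * Real.sin (Real.sqrt lam))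
    (heq2 : 2 * y2 - y1 = lam * y2)
    (heq1 : y2 = (1 - lam) * y1 + A * Real.sqrt lam * Real.cos (Real.sqrt lam)) :
    (lam ^ 2 - 3 * lam + 1) * Real.sin (Real.sqrt lam) +
      (2 - lam) * Real.sqrt lam * Real.cos (Real.sqrt lam) = 0 := by
  have eliminated : A * ((lam ^ 2 - 3 * lam + 1) * Real.sin (Real.sqrt lam) +
      (2 - lam) * Real.sqrt lam * Real.cos (Real.sqrt lam)) = 0 := by
    linear_combination -(lam ^ 2 - 3 * lam + 1) * hy1 - (2 - lam) * heq1 + heq2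
  exact (mul_eq_zero.mp eliminated).resolve_left hA

theorem hybrid_characteristic_equation
    (lam A y1 y2 : ℝ) (hlam0 : lam ≠ 0) (hlam2 : lam ≠ 2) (hA : A ≠ 0)
    (y : ℝ → ℝ) (hy : ∀ t ∈ Set.Icc (0 : ℝ) 1, y t = A * Real.sin (Real.sqrt lam * t))
    (hy1 : y1 = A * Real.sin (Real.sqrt lam))
    (heq2 : 2 * y2 - y1 = lam * y2)
    (heq1 : y2 = (1 - lam) * y1 + A * Real.sqrt lam * Real.cos (Real.sqrt lam)) :
    (lam ^ 2 - 3 * lam + 1) * Real.sin (Real.sqrt lam) +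
      (2 - lam) * Real.sqrt lam * Real.cos (Real.sqrt lam) = 0 :=
  hybrid_characteristic_equation_general lam A y1 y2 hA hy1 heq2 heq1
end
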